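/- If f is a continuous interval map with zero topological entropy, then the (primitive) period of every periodic point of f is a power of 2. -/

import Mathlib

open Dynamics

/-!
Write `m = 2 ^ k * q` with `q` odd; if `q > 1`, then `p` has odd minimal period `q` under
`g = f^[2 ^ k]`. Let `c` be the largest orbit point with `c < g c` and `d` the next orbit point;
then `g d ≤ c < d ≤ g c`, so `[c, d]` covers itself under `g` and its images eventually cover the
convex hull of the orbit. As `q` is odd, the orbit cannot switch sides of `(c, d)` at every step,
so some orbit point `x` lies on the same side as `g x`, and an iterate sending `x` to `d` maps
`[x, g x]` over `[g d, d] ⊇ [c, d]`. Hence an iterate of `g` has a horseshoe: two adjacent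
intervals, each mapped over their union. Its second iterate has two such intervals at positive
distance, so every finite word in two letters is the itinerary of an orbit, the number of
separated orbit segments grows exponentially, and the entropy is positive.
-/

open Set Function

section Itinerary

variable {α ι : Type*} {T : α → α} {C : ι → Set α}

theorem subset_image_iterate_setOf_itinerary (hcov : ∀ i j, C j ⊆ T '' C i) (w : ℕ → ι)
    (k : ℕ) : C (w k) ⊆ T^[k] '' {z | ∀ i ≤ k, T^[i] z ∈ C (w i)} := by
  induction k generalizing w with
  | zero => exact fun y hy ↦ ⟨y, fun i hi ↦ by rwa [Nat.le_zero.1 hi], rfl⟩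
  | succ k ih =>
    intro y hy
    obtain ⟨z', hz', rfl⟩ := ih (fun i ↦ w (i + 1)) hy
    obtain ⟨z, hz, rfl⟩ := hcov (w 0) (w 1) (hz' 0 k.zero_le)
    refine ⟨z, fun i hi ↦ ?_, iterate_succ_apply T k z⟩
    cases i with
    | zero => exact hz
    | succ i => rw [iterate_succ_apply]; exact hz' i (by omega)

theorem exists_itinerary (hcov : ∀ i j, C j ⊆ T '' C i) (hne : ∀ i, (C i).Nonempty)
    (w : ℕ → ι) (k : ℕ) : ∃ z, ∀ i ≤ k, T^[i] z ∈ C (w i) :=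
  let ⟨_, hy⟩ := hne (w k)
  let ⟨z, hz, _⟩ := subset_image_iterate_setOf_itinerary hcov w k hy
  ⟨z, hz⟩

end Itinerary

section Entropy

variable {X : Type*} [PseudoMetricSpace X] {f : X → X} {F A B : Set X} {n₀ : ℕ} {ε : ℝ}

theorem isDynNetIn_of_pairwise_le_dist {s : Set X} {n : ℕ} (hsF : s ⊆ F)
    (hsep : s.Pairwise fun x y ↦ ∃ k < n, ε ≤ dist (f^[k] x) (f^[k] y)) :
    IsDynNetIn f F {q | dist q.1 q.2 < ε / 2} n s := by
  refine ⟨hsF, fun x hx y hy hxy ↦ Set.disjoint_left.2 fun z hzx hzy ↦ ?_⟩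
  obtain ⟨k, hk, hε⟩ := hsep hx hy hxy
  have hxz : dist (f^[k] x) (f^[k] z) < ε / 2 := mem_dynEntourage.1 hzx k hk
  have hyz : dist (f^[k] y) (f^[k] z) < ε / 2 := mem_dynEntourage.1 hzy k hk
  linarith [dist_triangle_right (f^[k] x) (f^[k] y) (f^[k] z)]

theorem card_le_netMaxcard_of_pairwise_le_dist {ι : Type*} [Fintype ι] {φ : ι → X} {n : ℕ}
    (hε : 0 < ε) (hF : ∀ i, φ i ∈ F)
    (hsep : Pairwise fun i j ↦ ∃ k < n, ε ≤ dist (f^[k] (φ i)) (f^[k] (φ j))) :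
    Fintype.card ι ≤ netMaxcard f F {q | dist q.1 q.2 < ε / 2} n := by
  classical
  have hinj : Injective φ := fun i j he ↦ by
    by_contra hne
    obtain ⟨k, -, hk⟩ := hsep hne
    rw [he, dist_self] at hk
    exact hk.not_gt hε
  have hnet : IsDynNetIn f F {q | dist q.1 q.2 < ε / 2} n (Finset.univ.image φ : Set X) := by
    refine isDynNetIn_of_pairwise_le_dist (fun x hx ↦ ?_) fun x hx y hy hxy ↦ ?_
    · obtain ⟨i, -, rfl⟩ := Finset.mem_image.1 hx
      exact hF i
    · obtain ⟨i, -, rfl⟩ := Finset.mem_image.1 hx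
      obtain ⟨j, -, rfl⟩ := Finset.mem_image.1 hy
      exact hsep fun h ↦ hxy (h ▸ rfl)
  simpa [Finset.card_image_of_injective _ hinj] using hnet.card_le_netMaxcard

theorem pow_le_netMaxcard_of_covers (hAB : A ∪ B ⊆ F) (hAne : A.Nonempty) (hε : 0 < ε)
    (hsep : ∀ x ∈ A, ∀ y ∈ B, ε ≤ dist x y)
    (hcovA : A ∪ B ⊆ f^[n₀] '' A) (hcovB : A ∪ B ⊆ f^[n₀] '' B) (hn₀ : 0 < n₀) (n : ℕ) :
    2 ^ n ≤ netMaxcard f F {q | dist q.1 q.2 < ε / 2} (n₀ * n) := by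
  set C : Bool → Set X := fun b ↦ cond b B A
  have hCsub : ∀ b, C b ⊆ A ∪ B := fun b ↦ by
    cases b; exacts [subset_union_left, subset_union_right]
  have hcovC : ∀ b, A ∪ B ⊆ f^[n₀] '' C b := fun b ↦ by cases b; exacts [hcovA, hcovB]
  have hsepC : ∀ b b', b ≠ b' → ∀ x ∈ C b, ∀ y ∈ C b', ε ≤ dist x y := by
    intro b b' hb x hx y hy
    cases b <;> cases b' <;> simp only [ne_eq, not_true_eq_false] at hb
    exacts [hsep x hx y hy, dist_comm x y ▸ hsep y hy x hx]
  have hne : ∀ b, (C b).Nonempty := fun b ↦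
    ((hAne.mono subset_union_left).mono (hcovC b)).of_image
  choose φ hφ using fun w : Fin n → Bool ↦ exists_itinerary
    (fun b b' ↦ (hCsub b').trans (hcovC b)) hne (fun i ↦ if h : i < n then w ⟨i, h⟩ else false) n
  have hcard := card_le_netMaxcard_of_pairwise_le_dist (f := f) hε
    (fun w ↦ hAB (hCsub _ (hφ w 0 n.zero_le))) fun w w' hne ↦ by
      obtain ⟨i, hi⟩ := Function.ne_iff.1 hne
      have h₁ := hφ w i i.2.le
      have h₂ := hφ w' i i.2.le
      simp only [i.2, dite_true, ← iterate_mul] at h₁ h₂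
      exact ⟨n₀ * i, Nat.mul_lt_mul_of_pos_left i.2 hn₀, hsepC _ _ hi _ h₁ _ h₂⟩
  simpa using hcard

open ExpGrowth in
theorem log_two_le_mul_coverEntropy_of_covers (hAB : A ∪ B ⊆ F) (hAne : A.Nonempty)
    (hε : 0 < ε) (hsep : ∀ x ∈ A, ∀ y ∈ B, ε ≤ dist x y)
    (hcovA : A ∪ B ⊆ f^[n₀] '' A) (hcovB : A ∪ B ⊆ f^[n₀] '' B) (hn₀ : 0 < n₀) :
    ENNReal.log 2 ≤ n₀ * coverEntropy f F := by
  have hmono : Monotone fun n ↦ (netMaxcard f F {q | dist q.1 q.2 < ε / 2} n : ENNReal) :=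
    fun _ _ h ↦ ENat.toENNReal_le.2 (netMaxcard_monotone_time f F _ h)
  calc ENNReal.log 2 = expGrowthSup fun n ↦ 2 ^ n := expGrowthSup_pow.symm
    _ ≤ expGrowthSup fun n ↦ (netMaxcard f F {q | dist q.1 q.2 < ε / 2} (n₀ * n) : ENNReal) :=
      expGrowthSup_monotone fun n ↦ by
        simpa using ENat.toENNReal_le.2
          (pow_le_netMaxcard_of_covers hAB hAne hε hsep hcovA hcovB hn₀ n)
    _ = n₀ * netEntropyEntourage f F {q | dist q.1 q.2 < ε / 2} :=
      hmono.expGrowthSup_comp_mul hn₀.ne'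
    _ ≤ n₀ * coverEntropy f F :=
      mul_le_mul_of_nonneg_left
        (netEntropyEntourage_le_coverEntropy f F (Metric.dist_mem_uniformity (half_pos hε)))
        (by positivity)

end Entropy

structure IsHorseshoe (h : ℝ → ℝ) (x₀ x₁ x₂ : ℝ) : Prop where
  lt₀₁ : x₀ < x₁
  lt₁₂ : x₁ < x₂
  subset_image_left : Icc x₀ x₂ ⊆ h '' Icc x₀ x₁
  subset_image_right : Icc x₀ x₂ ⊆ h '' Icc x₁ x₂

theorem exists_Icc_subset_image_Icc_of_lt {h : ℝ → ℝ} {x₀ x₁ y₁ y₂ : ℝ}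
    (hc : ContinuousOn h (Icc x₀ x₁)) (hy₁ : y₁ ∈ h '' Icc x₀ x₁) (hy₂ : y₂ ∈ h '' Icc x₀ x₁)
    (hne₁ : h x₁ ≠ y₁) (hne₂ : h x₁ ≠ y₂) :
    ∃ α β, x₀ ≤ α ∧ α ≤ β ∧ β < x₁ ∧ Icc y₁ y₂ ⊆ h '' Icc α β := by
  obtain ⟨u, hu, rfl⟩ := hy₁
  obtain ⟨v, hv, rfl⟩ := hy₂
  have hux : u < x₁ := hu.2.lt_of_ne (by rintro rfl; exact hne₁ rfl)
  have hvx : v < x₁ := hv.2.lt_of_ne (by rintro rfl; exact hne₂ rfl)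
  exact ⟨u ⊓ v, u ⊔ v, le_inf hu.1 hv.1, inf_le_sup, sup_lt_iff.2 ⟨hux, hvx⟩,
    Icc_subset_uIcc.trans (intermediate_value_uIcc (hc.mono (uIcc_subset_Icc hu hv)))⟩

theorem exists_isHorseshoe_of_subset_image {h : ℝ → ℝ} {u v c d : ℝ} (huv : u < v) (hcd : c < d)
    (hdisj : v ≤ c ∨ d ≤ u) (hu : Icc (u ⊓ c) (v ⊔ d) ⊆ h '' Icc u v)
    (hc : Icc (u ⊓ c) (v ⊔ d) ⊆ h '' Icc c d) :
    ∃ x₀ x₁ x₂, Icc x₀ x₂ = Icc (u ⊓ c) (v ⊔ d) ∧ IsHorseshoe h x₀ x₁ x₂ := by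
  rcases hdisj with hvc | hdu
  · rw [inf_eq_left.2 (huv.le.trans hvc), sup_eq_right.2 (hvc.trans hcd.le)] at hu hc ⊢
    exact ⟨u, c, d, rfl, huv.trans_le hvc, hcd,
      hu.trans (image_mono (Icc_subset_Icc le_rfl hvc)), hc⟩
  · rw [inf_eq_right.2 (hcd.le.trans hdu), sup_eq_left.2 (hdu.trans huv.le)] at hu hc ⊢
    exact ⟨c, d, v, rfl, hcd, hdu.trans_lt huv, hc,
      hu.trans (image_mono (Icc_subset_Icc hdu le_rfl))⟩

namespace IsHorseshoe

variable {h : ℝ → ℝ} {x₀ x₁ x₂ : ℝ}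

theorem subset_image_self (hh : IsHorseshoe h x₀ x₁ x₂) : Icc x₀ x₂ ⊆ h '' Icc x₀ x₂ :=
  hh.subset_image_right.trans (image_mono (Icc_subset_Icc hh.lt₀₁.le le_rfl))

theorem subset_image_iterate_two_right (hh : IsHorseshoe h x₀ x₁ x₂) :
    Icc x₀ x₂ ⊆ h^[2] '' Icc x₁ x₂ := by
  rw [iterate_succ, iterate_one, image_comp]
  exact hh.subset_image_self.trans (image_mono hh.subset_image_right)

theorem exists_subset_image_iterate_two_left (hh : IsHorseshoe h x₀ x₁ x₂)
    (hc : ContinuousOn h (Icc x₀ x₂)) :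
    ∃ α β, x₀ ≤ α ∧ α ≤ β ∧ β < x₁ ∧ Icc x₀ x₂ ⊆ h^[2] '' Icc α β := by
  have h₀ : x₀ ∈ Icc x₀ x₂ := left_mem_Icc.2 (hh.lt₀₁.trans hh.lt₁₂).le
  have h₁ : x₁ ∈ Icc x₀ x₂ := ⟨hh.lt₀₁.le, hh.lt₁₂.le⟩
  have h₂ : x₂ ∈ Icc x₀ x₂ := right_mem_Icc.2 (hh.lt₀₁.trans hh.lt₁₂).le
  -- the preimages in `[x₀, x₁]` of `y₁` and `y₂` then stay away from `x₁`
  obtain ⟨y₁, y₂, hy₁, hy₂, hne₁, hne₂, hcov⟩ : ∃ y₁ y₂, y₁ ∈ Icc x₀ x₂ ∧ y₂ ∈ Icc x₀ x₂ ∧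
      h x₁ ≠ y₁ ∧ h x₁ ≠ y₂ ∧ Icc x₀ x₂ ⊆ h '' Icc y₁ y₂ := by
    by_cases e₀ : h x₁ = x₀
    · exact ⟨x₁, x₂, h₁, h₂, e₀ ▸ hh.lt₀₁.ne, e₀ ▸ (hh.lt₀₁.trans hh.lt₁₂).ne,
        hh.subset_image_right⟩
    by_cases e₂ : h x₁ = x₂
    · exact ⟨x₀, x₁, h₀, h₁, e₂ ▸ (hh.lt₀₁.trans hh.lt₁₂).ne', e₂ ▸ hh.lt₁₂.ne',
        hh.subset_image_left⟩
    exact ⟨x₀, x₂, h₀, h₂, e₀, e₂, hh.subset_image_self⟩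
  obtain ⟨α, β, hα, hαβ, hβ, hsub⟩ := exists_Icc_subset_image_Icc_of_lt
    (hc.mono (Icc_subset_Icc le_rfl hh.lt₁₂.le)) (hh.subset_image_left hy₁)
    (hh.subset_image_left hy₂) hne₁ hne₂
  refine ⟨α, β, hα, hαβ, hβ, ?_⟩
  rw [iterate_succ, iterate_one, image_comp]
  exact hcov.trans (image_mono hsub)

theorem coverEntropy_pos {f : ℝ → ℝ} {F : Set ℝ} {n : ℕ} (hh : IsHorseshoe (f^[n]) x₀ x₁ x₂)
    (hF : Icc x₀ x₂ ⊆ F) (hc : ContinuousOn f^[n] (Icc x₀ x₂)) : 0 < coverEntropy f F := by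
  have hn : 0 < n := Nat.pos_of_ne_zero fun h0 ↦ by
    have := hh.subset_image_left (right_mem_Icc.2 (hh.lt₀₁.trans hh.lt₁₂).le)
    rw [h0, iterate_zero, image_id] at this
    exact this.2.not_gt hh.lt₁₂
  obtain ⟨α, β, hα, hαβ, hβ, hcovA⟩ := hh.exists_subset_image_iterate_two_left hc
  have hcovB := hh.subset_image_iterate_two_right
  rw [← iterate_mul] at hcovA hcovB
  have hsub : Icc α β ∪ Icc x₁ x₂ ⊆ Icc x₀ x₂ :=
    union_subset (Icc_subset_Icc hα (hβ.trans hh.lt₁₂).le) (Icc_subset_Icc hh.lt₀₁.le le_rfl)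
  have hsep : ∀ x ∈ Icc α β, ∀ y ∈ Icc x₁ x₂, x₁ - β ≤ dist x y := fun x hx y hy ↦ by
    rw [Real.dist_eq, abs_sub_comm]
    exact (by linarith [hx.2, hy.1] : x₁ - β ≤ y - x).trans (le_abs_self _)
  have hlog := log_two_le_mul_coverEntropy_of_covers (hsub.trans hF) (nonempty_Icc.2 hαβ)
    (sub_pos.2 hβ) hsep (hsub.trans hcovA) (hsub.trans hcovB) (by positivity)
  have hpos := (ENNReal.zero_lt_log_iff.2 ENNReal.one_lt_two).trans_le hlog
  exact ((EReal.mul_pos_iff.1 hpos).resolve_right fun h ↦ h.1.not_ge (by positivity)).2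

end IsHorseshoe

section PeriodicOrbit

variable {α : Type*} {g : α → α} {p x y : α}

theorem exists_iterate_iff_iterate_succ_of_odd {q : ℕ} (hq : Odd q) (hp : IsPeriodicPt g q p)
    (S : α → Prop) : ∃ n, (S (g^[n] p) ↔ S (g^[n + 1] p)) := by
  by_contra! h
  have hpar : ∀ n, (S (g^[n] p) ↔ (S p ↔ Even n)) := by
    intro n
    induction n with
    | zero => simp
    | succ n ih =>
      have := h n
      rw [Nat.even_add_one]
      tauto
  have := hpar q
  rw [hp.eq] at this
  have := Nat.not_even_iff_odd.2 hq
  tauto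

noncomputable def periodicOrbitFinset [DecidableEq α] (g : α → α) (p : α) : Finset α :=
  (Finset.range (minimalPeriod g p)).image (g^[·] p)

variable [DecidableEq α]

theorem iterate_mem_periodicOrbitFinset (hp : p ∈ periodicPts g) (n : ℕ) :
    g^[n] p ∈ periodicOrbitFinset g p :=
  Finset.mem_image.2 ⟨n % minimalPeriod g p,
    Finset.mem_range.2 (Nat.mod_lt _ (minimalPeriod_pos_of_mem_periodicPts hp)),
    iterate_mod_minimalPeriod_eq⟩

theorem exists_iterate_eq_of_mem_periodicOrbitFinset (hx : x ∈ periodicOrbitFinset g p) :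
    ∃ n, g^[n] p = x :=
  let ⟨n, _, hn⟩ := Finset.mem_image.1 hx
  ⟨n, hn⟩

theorem mem_of_mem_periodicOrbitFinset {I : Set α} (hmaps : MapsTo g I I) (hp : p ∈ I)
    (hx : x ∈ periodicOrbitFinset g p) : x ∈ I := by
  obtain ⟨n, rfl⟩ := exists_iterate_eq_of_mem_periodicOrbitFinset hx
  exact hmaps.iterate n hp

theorem apply_mem_periodicOrbitFinset (hp : p ∈ periodicPts g)
    (hx : x ∈ periodicOrbitFinset g p) : g x ∈ periodicOrbitFinset g p := by
  obtain ⟨n, rfl⟩ := exists_iterate_eq_of_mem_periodicOrbitFinset hx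
  simpa only [← iterate_succ_apply' g] using iterate_mem_periodicOrbitFinset hp _

theorem apply_ne_of_mem_periodicOrbitFinset (hp : p ∈ periodicPts g) (hone : minimalPeriod g p ≠ 1)
    (hx : x ∈ periodicOrbitFinset g p) : g x ≠ x := fun hfix ↦ by
  obtain ⟨n, rfl⟩ := exists_iterate_eq_of_mem_periodicOrbitFinset hx
  exact hone (minimalPeriod_apply_iterate hp n ▸ minimalPeriod_eq_one_iff_isFixedPt.2 hfix)

theorem exists_iterate_apply_eq_of_mem_periodicOrbitFinset (hp : p ∈ periodicPts g)
    (hx : x ∈ periodicOrbitFinset g p) (hy : y ∈ periodicOrbitFinset g p) :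
    ∃ n, g^[n] x = y := by
  obtain ⟨i, rfl⟩ := exists_iterate_eq_of_mem_periodicOrbitFinset hx
  obtain ⟨j, rfl⟩ := exists_iterate_eq_of_mem_periodicOrbitFinset hy
  have hi : g^[i] p ∈ periodicPts g :=
    mk_mem_periodicPts (minimalPeriod_pos_of_mem_periodicPts hp)
      ((isPeriodicPt_minimalPeriod g p).apply_iterate i)
  rw [← mem_periodicOrbit_iff hi, periodicOrbit_apply_iterate_eq hp]
  exact iterate_mem_periodicOrbit hp j

end PeriodicOrbit

theorem Finset.exists_reversed_gap {β : Type*} [LinearOrder β] {g : β → β} (P : Finset β)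
    (hP : P.Nonempty) (hmaps : ∀ x ∈ P, g x ∈ P) (hfix : ∀ x ∈ P, g x ≠ x) :
    ∃ c ∈ P, ∃ d ∈ P, c < d ∧ d ≤ g c ∧ g d ≤ c ∧ ∀ x ∈ P, x ≤ c ∨ d ≤ x := by
  have hS : (P.filter fun x ↦ x < g x).Nonempty := ⟨P.min' hP, Finset.mem_filter.2
    ⟨P.min'_mem hP, (P.min'_le _ (hmaps _ (P.min'_mem hP))).lt_of_ne (hfix _ (P.min'_mem hP)).symm⟩⟩
  set c := (P.filter fun x ↦ x < g x).max' hS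
  obtain ⟨hcP, hcg⟩ := Finset.mem_filter.1 ((P.filter fun x ↦ x < g x).max'_mem hS)
  have hD : (P.filter fun x ↦ c < x).Nonempty := ⟨g c, Finset.mem_filter.2 ⟨hmaps c hcP, hcg⟩⟩
  set d := (P.filter fun x ↦ c < x).min' hD
  obtain ⟨hdP, hcd⟩ := Finset.mem_filter.1 ((P.filter fun x ↦ c < x).min'_mem hD)
  have hside : ∀ x ∈ P, x ≤ c ∨ d ≤ x := fun x hx ↦
    (le_or_gt x c).imp_right fun h ↦ Finset.min'_le _ x (Finset.mem_filter.2 ⟨hx, h⟩)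
  have hgd : g d < d := (hfix d hdP).lt_or_gt.resolve_right fun h ↦
    (Finset.le_max' _ d (Finset.mem_filter.2 ⟨hdP, h⟩)).not_gt hcd
  exact ⟨c, hcP, d, hdP, hcd, Finset.min'_le _ _ (Finset.mem_filter.2 ⟨hmaps c hcP, hcg⟩),
    (hside _ (hmaps d hdP)).resolve_right hgd.not_ge, hside⟩

theorem monotone_image_iterate_of_subset_image {α : Type*} {f : α → α} {s : Set α}
    (h : s ⊆ f '' s) : Monotone fun n ↦ f^[n] '' s :=
  monotone_nat_of_le_succ fun n ↦ by
    rw [iterate_succ, image_comp]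
    exact image_mono h

theorem exists_Icc_subset_image_iterate_of_subset_image {g : ℝ → ℝ} {s : Set ℝ}
    (hs : IsPreconnected s) (hcont : ∀ n, ContinuousOn g^[n] s) (hself : s ⊆ g '' s) {c : ℝ}
    (hc : c ∈ s) {i j : ℕ} : ∃ M, Icc (g^[i] c) (g^[j] c) ⊆ g^[M] '' s :=
  have hmono := monotone_image_iterate_of_subset_image hself
  ⟨max i j, (hs.image _ (hcont _)).Icc_subset (hmono (le_max_left i j) ⟨c, hc, rfl⟩)
    (hmono (le_max_right i j) ⟨c, hc, rfl⟩)⟩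

theorem Icc_subset_image_iterate_uIcc {g : ℝ → ℝ} {c d x : ℝ} {s : ℕ} (hgd : g d ≤ c)
    (hs : g^[s] x = d) (hcont : ContinuousOn g^[s] (uIcc x (g x))) :
    Icc c d ⊆ g^[s] '' uIcc x (g x) := by
  have hsg : g^[s] (g x) = g d := by rw [← iterate_succ_apply, iterate_succ_apply', hs]
  calc Icc c d ⊆ uIcc (g^[s] x) (g^[s] (g x)) := by
        rw [hs, hsg]; exact (Icc_subset_Icc hgd le_rfl).trans Icc_subset_uIcc'
    _ ⊆ g^[s] '' uIcc x (g x) := intermediate_value_uIcc hcont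

theorem exists_reversed_gap_subset_image_iterate {I : Set ℝ} [I.OrdConnected] {g : ℝ → ℝ}
    (hg : ContinuousOn g I) (hmaps : MapsTo g I I) {p : ℝ} (hp : p ∈ I)
    (hper : p ∈ periodicPts g) (hone : minimalPeriod g p ≠ 1) :
    ∃ c ∈ periodicOrbitFinset g p, ∃ d ∈ periodicOrbitFinset g p, c < d ∧ g d ≤ c ∧
      (∀ x ∈ periodicOrbitFinset g p, x ≤ c ∨ d ≤ x) ∧ Icc c d ⊆ g '' Icc c d ∧
      ∃ M, ∀ y ∈ periodicOrbitFinset g p, ∀ z ∈ periodicOrbitFinset g p,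
        Icc y z ⊆ g^[M] '' Icc c d := by
  set P := periodicOrbitFinset g p
  have hPne : P.Nonempty := ⟨p, iterate_mem_periodicOrbitFinset hper 0⟩
  have hPI : ∀ x ∈ P, x ∈ I := fun x ↦ mem_of_mem_periodicOrbitFinset hmaps hp
  obtain ⟨c, hcP, d, hdP, hcd, hdgc, hgdc, hside⟩ := P.exists_reversed_gap hPne
    (fun x ↦ apply_mem_periodicOrbitFinset hper)
    (fun x ↦ apply_ne_of_mem_periodicOrbitFinset hper hone)
  have hcdI : Icc c d ⊆ I := Set.Icc_subset I (hPI c hcP) (hPI d hdP)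
  have hself : Icc c d ⊆ g '' Icc c d :=
    (Icc_subset_Icc hgdc hdgc).trans (intermediate_value_Icc' hcd.le (hg.mono hcdI))
  obtain ⟨i, hi⟩ := exists_iterate_apply_eq_of_mem_periodicOrbitFinset hper hcP (P.min'_mem hPne)
  obtain ⟨j, hj⟩ := exists_iterate_apply_eq_of_mem_periodicOrbitFinset hper hcP (P.max'_mem hPne)
  obtain ⟨M, hM⟩ := exists_Icc_subset_image_iterate_of_subset_image isPreconnected_Icc
    (fun n ↦ (hg.iterate hmaps n).mono hcdI) hself (left_mem_Icc.2 hcd.le) (i := i) (j := j)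
  rw [hi, hj] at hM
  exact ⟨c, hcP, d, hdP, hcd, hgdc, hside, hself, M, fun y hy z hz ↦
    (Icc_subset_Icc (P.min'_le y hy) (P.le_max' z hz)).trans hM⟩

theorem exists_isHorseshoe_iterate_of_odd_minimalPeriod {I : Set ℝ} [I.OrdConnected]
    {g : ℝ → ℝ} (hg : ContinuousOn g I) (hmaps : MapsTo g I I) {p : ℝ} (hp : p ∈ I)
    (hodd : Odd (minimalPeriod g p)) (hone : minimalPeriod g p ≠ 1) :
    ∃ N x₀ x₁ x₂, Icc x₀ x₂ ⊆ I ∧ IsHorseshoe (g^[N]) x₀ x₁ x₂ := by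
  have hper : p ∈ periodicPts g := minimalPeriod_pos_iff_mem_periodicPts.1 hodd.pos
  set P := periodicOrbitFinset g p
  have hPne : P.Nonempty := ⟨p, iterate_mem_periodicOrbitFinset hper 0⟩
  have hgP : ∀ x ∈ P, g x ∈ P := fun x ↦ apply_mem_periodicOrbitFinset hper
  obtain ⟨c, hcP, d, hdP, hcd, hgdc, hside, hself, M, hM⟩ :=
    exists_reversed_gap_subset_image_iterate hg hmaps hp hper hone
  set lo := P.min' hPne
  set hi := P.max' hPne
  have hPhull : ∀ x ∈ P, x ∈ Icc lo hi := fun x hx ↦ ⟨P.min'_le x hx, P.le_max' x hx⟩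
  have hhull : Icc lo hi ⊆ I := Set.Icc_subset I
    (mem_of_mem_periodicOrbitFinset hmaps hp (P.min'_mem hPne))
    (mem_of_mem_periodicOrbitFinset hmaps hp (P.max'_mem hPne))
  -- since the period is odd, some orbit point `x` lies on the same side of `(c, d)` as `g x`
  obtain ⟨n, hn⟩ := exists_iterate_iff_iterate_succ_of_odd hodd (isPeriodicPt_minimalPeriod g p)
    (· ≤ c)
  set x := g^[n] p
  rw [iterate_succ_apply'] at hn
  have hxP : x ∈ P := iterate_mem_periodicOrbitFinset hper n
  obtain ⟨s, hs⟩ := exists_iterate_apply_eq_of_mem_periodicOrbitFinset hper hxP hdP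
  have hcover := Icc_subset_image_iterate_uIcc hgdc hs ((hg.iterate hmaps s).mono
    ((uIcc_subset_Icc (hPhull x hxP) (hPhull _ (hgP x hxP))).trans hhull))
  have hdisj : x ⊔ g x ≤ c ∨ d ≤ x ⊓ g x := (hside x hxP).imp (fun hxc ↦ sup_le hxc (hn.1 hxc))
    fun hdx ↦ le_inf hdx <| (hside _ (hgP x hxP)).resolve_left
      fun h ↦ (hcd.trans_le hdx).not_ge (hn.2 h)
  have hsub : Icc (x ⊓ g x ⊓ c) (x ⊔ g x ⊔ d) ⊆ Icc lo hi :=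
    Icc_subset_Icc (le_inf (le_inf (hPhull x hxP).1 (hPhull _ (hgP x hxP)).1) (hPhull c hcP).1)
      (sup_le (sup_le (hPhull x hxP).2 (hPhull _ (hgP x hxP)).2) (hPhull d hdP).2)
  have hcovx : Icc lo hi ⊆ g^[M + s] '' uIcc x (g x) := by
    rw [iterate_add, image_comp]
    exact (hM _ (P.min'_mem hPne) _ (P.max'_mem hPne)).trans (image_mono hcover)
  have hcovcd : Icc lo hi ⊆ g^[M + s] '' Icc c d :=
    (hM _ (P.min'_mem hPne) _ (P.max'_mem hPne)).trans
      (monotone_image_iterate_of_subset_image hself (Nat.le_add_right M s))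
  obtain ⟨x₀, x₁, x₂, hJ, hh⟩ := exists_isHorseshoe_of_subset_image
    (inf_lt_sup.2 fun h ↦ apply_ne_of_mem_periodicOrbitFinset hper hone hxP h.symm) hcd hdisj
    (hsub.trans hcovx) (hsub.trans hcovcd)
  exact ⟨M + s, x₀, x₁, x₂, hJ ▸ hsub.trans hhull, hh⟩

/-- If `f` is a continuous interval map with zero topological entropy, then the
primitive period of every periodic point of `f` is a power of `2`. -/
theorem zero_entropy_period_pow_two (a b : ℝ) (f : ℝ → ℝ)
    (hf : ContinuousOn f (Set.Icc a b))
    (hmaps : Set.MapsTo f (Set.Icc a b) (Set.Icc a b))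
    (hent : coverEntropy f (Set.Icc a b) = 0)
    (p : ℝ) (hp : p ∈ Set.Icc a b) (m : ℕ) (hm : 0 < m)
    (hper : f^[m] p = p) (hprim : ∀ k : ℕ, 0 < k → k < m → f^[k] p ≠ p) :
    ∃ n : ℕ, m = 2 ^ n := by
  have hper' : IsPeriodicPt f m p := hper
  have hmin : minimalPeriod f p = m :=
    (hper'.minimalPeriod_le hm).antisymm <| not_lt.1 fun hlt ↦
      hprim _ (hper'.minimalPeriod_pos hm) hlt iterate_minimalPeriod
  obtain ⟨k, q, hq, rfl⟩ := Nat.exists_eq_two_pow_mul_odd hm.ne'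
  refine ⟨k, ?_⟩
  by_contra hne
  have hminq : minimalPeriod f^[2 ^ k] p = q := by
    rw [minimalPeriod_iterate_eq_div_gcd (by positivity), hmin, Nat.gcd_mul_right_left,
      Nat.mul_div_cancel_left _ (by positivity)]
  obtain ⟨N, x₀, x₁, x₂, hI, hh⟩ := exists_isHorseshoe_iterate_of_odd_minimalPeriod
    (hf.iterate hmaps _) (hmaps.iterate _) hp (hminq ▸ hq)
    (by rintro hq1; simp [hminq ▸ hq1] at hne)
  rw [← iterate_mul] at hh
  exact (hh.coverEntropy_pos hI ((hf.iterate hmaps _).mono hI)).ne' hent
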